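/- arXiv:2211.11326 — 10 statements merged into one kernel-verified Lean document; each statement's English description precedes it below -/
import Mathlib

section
/- Let R be a partial applicative structure satisfying property K. Then the following are equivalent: (i) R is trivial; (ii) R is finite; (iii) R satisfies ID_R; (iv) R satisfies Assoc; (v) R satisfies Ab. -/
/-- Application lifted to partially-defined arguments: `oapp op x y` is the
value of the applicative term `x · y`, where `x`, `y` may be undefined. -/
def oapp {R : Type} (op : R → R → Option R) (x y : Option R) : Option R :=
  x.bind fun a => y.bind fun b => op a b

/-- The indexed entailment relation `φ ⊢_I ψ` on `P(R)^I` induced by a PAS. -/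
def Entails {R : Type} (op : R → R → Option R) {I : Type} (φ ψ : I → Set R) : Prop :=
  ∃ r : R, ∀ i : I, ∀ a ∈ φ i, ∃ b : R, op r a = some b ∧ b ∈ ψ i

/-- The entailment relation `A ⊢ B` on `P(R)` induced by a PAS. -/
def Entails1 {R : Type} (op : R → R → Option R) (A B : Set R) : Prop :=
  ∃ r : R, ∀ a ∈ A, ∃ b : R, op r a = some b ∧ b ∈ B

/-- `piter f n a` is the `n`-th iterate `f^n(a)` of the partial function `f` at `a`. -/
def piter {R : Type} (f : R → Option R) : ℕ → R → Option R
  | 0 => fun a => some a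
  | n + 1 => fun a => (piter f n a).bind f

/-- A partial function is TO if every point has finite odd order or finite divergence. -/
def TOfun {R : Type} (f : R → Option R) : Prop :=
  ∀ a : R,
    (∃ n : ℕ, (1 ≤ n ∧ piter f n a = some a ∧
        ∀ m : ℕ, 1 ≤ m → piter f m a = some a → n ≤ m) ∧ Odd n) ∨
    (∃ n : ℕ, 1 ≤ n ∧ piter f n a = none)

/-- A partial function is TL if every point is a fixed point or has finite divergence. -/
def TLfun {R : Type} (f : R → Option R) : Prop :=
  ∀ a : R, f a = some a ∨ (∃ n : ℕ, 1 ≤ n ∧ piter f n a = none)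

/-! The map `a ↦ k·a` is injective, because `k·a·b = a` recovers `a`. Each of Finite,
ID_R, Assoc and Ab forces `k` into its image, `k·a = k`; but then `k·b = k·a·b = a` for every `b`,
so `k·_` is constant as well as injective, and `R` has a single element. -/

def IsKCombinator {R : Type} (op : R → R → Option R) (k : R) : Prop :=
  ∀ a b : R, ∃ ka : R, op k a = some ka ∧ op ka b = some a

namespace IsKCombinator

variable {R : Type} {op : R → R → Option R} {k : R}

theorem app_app (hk : IsKCombinator op k) {a ka : R} (hka : op k a = some ka) (b : R) :
    op ka b = some a := by
  obtain ⟨ka', hka', hb⟩ := hk a b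
  rwa [Option.some_inj.mp (hka.symm.trans hka')]

theorem app_injective (hk : IsKCombinator op k) : Function.Injective (op k) := by
  intro a a' h
  obtain ⟨ka, hka, -⟩ := hk a a
  exact Option.some_inj.mp ((hk.app_app hka a).symm.trans (hk.app_app (h ▸ hka) a))

theorem trivial_of_app_eq_self (hk : IsKCombinator op k) {a : R} (h : op k a = some k) :
    ∃ c : R, (∀ b : R, b = c) ∧ op c c = some c := by
  have hconst : ∀ b : R, op k b = some a := hk.app_app h
  have hall : ∀ b : R, b = a := fun b => hk.app_injective ((hconst b).trans (hconst a).symm)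
  refine ⟨a, hall, ?_⟩
  obtain rfl := hall k
  exact hconst k

theorem exists_app_eq_self_of_finite [Finite R] (hk : IsKCombinator op k) :
    ∃ a : R, op k a = some k := by
  choose g hg using fun a => (hk a a).imp fun _ h => h.1
  have hg_inj : Function.Injective g :=
    fun a a' h => hk.app_injective ((hg a).trans (h ▸ (hg a').symm))
  obtain ⟨a, ha⟩ := Finite.surjective_of_injective hg_inj k
  exact ⟨a, ha ▸ hg a⟩

theorem app_self_eq_self_of_rightIdentity (hk : IsKCombinator op k) {j : R}
    (hj : ∀ a : R, op a j = some a) : op k k = some k := by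
  obtain ⟨kk, hkk, -⟩ := hk k k
  rw [hkk, ← hj kk, hk.app_app hkk]

theorem exists_app_eq_self_of_assoc (hk : IsKCombinator op k)
    (hassoc : ∀ a b c : R, oapp op (some a) (op b c) = oapp op (op a b) (some c)) :
    ∃ a : R, op k a = some k := by
  obtain ⟨kk, hkk, -⟩ := hk k k
  refine ⟨kk, ?_⟩
  simpa [oapp, hkk, hk.app_app hkk] using hassoc k k k

theorem exists_app_eq_self_of_comm (hk : IsKCombinator op k)
    (hcomm : ∀ a b : R, op a b = op b a) : ∃ a : R, op k a = some k := by
  obtain ⟨kk, hkk, -⟩ := hk k k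
  exact ⟨kk, (hcomm k kk).trans (hk.app_app hkk k)⟩

end IsKCombinator

theorem stmt_1_general {R : Type} (op : R → R → Option R)
    (hK : ∃ k : R, ∀ a b : R, ∃ ka : R, op k a = some ka ∧ op ka b = some a) :
    [ -- Trivial
      (∃ a : R, (∀ b : R, b = a) ∧ op a a = some a),
      -- Finite
      Finite R,
      -- ID_R
      (∃ j : R, ∀ a : R, op a j = some a),
      -- Assoc : a·(b·c) ≃ (a·b)·c
      (∀ a b c : R, oapp op (some a) (op b c) = oapp op (op a b) (some c)),
      -- Ab
      (∀ a b : R, op a b = op b a) ].TFAE := by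
  obtain ⟨k, hk⟩ : ∃ k : R, IsKCombinator op k := hK
  tfae_have 1 → 2 := by
    rintro ⟨a, ha, -⟩
    have : Subsingleton R := ⟨fun x y => (ha x).trans (ha y).symm⟩
    exact Finite.of_subsingleton
  tfae_have 1 → 3 := by
    rintro ⟨a, ha, haa⟩
    exact ⟨a, fun x => ha x ▸ haa⟩
  tfae_have 1 → 4 := by
    rintro ⟨a, ha, haa⟩ x y z
    simp only [ha x, ha y, ha z, oapp, haa, Option.bind_some]
  tfae_have 1 → 5 := by
    rintro ⟨a, ha, -⟩ x y
    rw [ha x, ha y]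
  tfae_have 2 → 1 := fun _ =>
    (hk.exists_app_eq_self_of_finite).elim fun _ => hk.trivial_of_app_eq_self
  tfae_have 3 → 1 := fun ⟨_, hj⟩ =>
    hk.trivial_of_app_eq_self (hk.app_self_eq_self_of_rightIdentity hj)
  tfae_have 4 → 1 := fun hassoc =>
    (hk.exists_app_eq_self_of_assoc hassoc).elim fun _ => hk.trivial_of_app_eq_self
  tfae_have 5 → 1 := fun hcomm =>
    (hk.exists_app_eq_self_of_comm hcomm).elim fun _ => hk.trivial_of_app_eq_self
  tfae_finish

/-- For a PAS satisfying K, the properties Trivial, Finite, ID_R,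
Assoc and Ab are all equivalent. -/
theorem stmt_1 {R : Type} [Nonempty R] (op : R → R → Option R)
    (hK : ∃ k : R, ∀ a b : R, ∃ ka : R, op k a = some ka ∧ op ka b = some a) :
    [ -- Trivial
      (∃ a : R, (∀ b : R, b = a) ∧ op a a = some a),
      -- Finite
      Finite R,
      -- ID_R
      (∃ j : R, ∀ a : R, op a j = some a),
      -- Assoc : a·(b·c) ≃ (a·b)·c
      (∀ a b c : R, oapp op (some a) (op b c) = oapp op (op a b) (some c)),
      -- Ab
      (∀ a b : R, op a b = op b a) ].TFAE :=
  stmt_1_general op hK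
end

section
/- Let R be a partial combinatory algebra. Then the following are equivalent: (i) R is trivial; (ii) R satisfies Ab; (iii) R satisfies Assoc; (iv) R satisfies ID_R; (v) R satisfies 1W; (vi) R is finite. -/
/-!
The map `c : a ↦ k·a` is total and injective, since `(k·a)·(k·a) = a`. Each of Ab, Assoc, ID_R
and 1W forces two values of `c` to coincide (or `c` to be the identity while `k·b = k`), so all
elements are equal. If `R` is finite, the injective map `c` is surjective, so `k = k·x` for some
`x`; then `k·b = x` for every `b`, i.e. `c` is constant, and injectivity makes `R` a singleton.
-/

def IsKComb {R : Type} (op : R → R → Option R) (k : R) : Prop :=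
  ∀ a b : R, ∃ ka : R, op k a = some ka ∧ op ka b = some a

namespace IsKComb

variable {R : Type} {op : R → R → Option R} {k : R}

theorem exists_const (hk : IsKComb op k) :
    ∃ c : R → R, ∀ a, op k a = some (c a) ∧ ∀ b, op (c a) b = some a := by
  choose c hc using fun a => hk a a
  refine ⟨c, fun a => ⟨(hc a).1, fun b => ?_⟩⟩
  obtain ⟨ka, hka, hkab⟩ := hk a b
  rw [(hc a).1, Option.some_inj] at hka
  rwa [hka]

theorem _root_.Function.Injective.of_const_app {c : R → R} (hc : ∀ a b, op (c a) b = some a) :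
    Function.Injective c := fun a b hab =>
  Option.some_inj.mp ((hc a a).symm.trans (hab ▸ hc b a))

theorem trivial_of_subsingleton [Subsingleton R] (hk : IsKComb op k) :
    ∃ a : R, (∀ b : R, b = a) ∧ op a a = some a := by
  obtain ⟨kk, hkk, -⟩ := hk k k
  exact ⟨k, fun b => Subsingleton.elim b k, hkk.trans (congrArg some (Subsingleton.elim kk k))⟩

theorem subsingleton_of_comm (hk : IsKComb op k)
    (hAb : ∀ a b : R, op a b = op b a) : Subsingleton R := by
  obtain ⟨c, hc⟩ := hk.exists_const
  refine ⟨fun a b => Option.some_inj.mp ?_⟩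
  rw [← (hc a).2 (c b), hAb, (hc b).2]

theorem subsingleton_of_assoc (hk : IsKComb op k)
    (hA : ∀ a b c : R, oapp op (some a) (op b c) = oapp op (op a b) (some c)) :
    Subsingleton R := by
  obtain ⟨c, hc⟩ := hk.exists_const
  have hinj := Function.Injective.of_const_app fun a => (hc a).2
  -- `k·(k·a) ≃ (k·k)·a = k` for every `a`
  have hkka : ∀ a, c (c a) = k := fun a => by
    have h := hA k k a
    simp only [oapp, (hc a).1, (hc k).1, (hc k).2, Option.bind_some] at h
    exact Option.some_inj.mp (((hc (c a)).1).symm.trans h)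
  exact ⟨fun a b => hinj (hinj ((hkka a).trans (hkka b).symm))⟩

theorem subsingleton_of_right_id (hk : IsKComb op k)
    (hJ : ∃ j : R, ∀ a : R, op a j = some a) : Subsingleton R := by
  obtain ⟨j, hj⟩ := hJ
  obtain ⟨c, hc⟩ := hk.exists_const
  -- `k·a = (k·a)·j = a`
  have hc_id : ∀ a, c a = a := fun a => Option.some_inj.mp ((hj (c a)).symm.trans ((hc a).2 j))
  have hk_const : ∀ b, b = k := fun b => by
    have h := (hc k).2 b
    rwa [hc_id, (hc b).1, hc_id, Option.some_inj] at h
  exact ⟨fun a b => (hk_const a).trans (hk_const b).symm⟩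

theorem subsingleton_of_oneWay (hk : IsKComb op k)
    (h1W : ∀ r s a b : R, op r a = some b → op s b = some a → a = b) : Subsingleton R := by
  obtain ⟨c, hc⟩ := hk.exists_const
  exact ⟨fun a b => h1W (c b) (c a) a b ((hc b).2 a) ((hc a).2 b)⟩

theorem subsingleton_of_finite [Finite R] (hk : IsKComb op k) : Subsingleton R := by
  obtain ⟨c, hc⟩ := hk.exists_const
  have hinj := Function.Injective.of_const_app fun a => (hc a).2
  obtain ⟨x, hx⟩ := (Finite.injective_iff_surjective.mp hinj) k
  have hc_const : ∀ b, c b = x := fun b =>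
    Option.some_inj.mp ((hc b).1.symm.trans (hx ▸ (hc x).2 b))
  exact ⟨fun a b => hinj ((hc_const a).trans (hc_const b).symm)⟩

end IsKComb

theorem stmt_3_general {R : Type} (op : R → R → Option R)
    (hK : ∃ k : R, ∀ a b : R, ∃ ka : R, op k a = some ka ∧ op ka b = some a) :
    [ -- Trivial
      (∃ a : R, (∀ b : R, b = a) ∧ op a a = some a),
      -- Ab
      (∀ a b : R, op a b = op b a),
      -- Assoc
      (∀ a b c : R, oapp op (some a) (op b c) = oapp op (op a b) (some c)),
      -- ID_R
      (∃ j : R, ∀ a : R, op a j = some a),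
      -- 1W
      (∀ r s a b : R, op r a = some b → op s b = some a → a = b),
      -- Finite
      Finite R ].TFAE := by
  obtain ⟨k, hk : IsKComb op k⟩ := hK
  have htriv {P : Prop} (h : P → Subsingleton R) (hP : P) :
      ∃ a : R, (∀ b : R, b = a) ∧ op a a = some a :=
    have := h hP
    hk.trivial_of_subsingleton
  tfae_have 1 → 2 := by rintro ⟨a, ha, -⟩ x y; rw [ha x, ha y]
  tfae_have 1 → 3 := by rintro ⟨a, ha, haa⟩ x y z; rw [ha x, ha y, ha z]; simp [oapp, haa]
  tfae_have 1 → 4 := by rintro ⟨a, ha, haa⟩; exact ⟨a, fun b => ha b ▸ haa⟩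
  tfae_have 1 → 5 := by rintro ⟨a, ha, -⟩ r s x y - -; rw [ha x, ha y]
  tfae_have 1 → 6 := by
    rintro ⟨a, ha, -⟩
    have : Subsingleton R := ⟨fun x y => (ha x).trans (ha y).symm⟩
    infer_instance
  tfae_have 2 → 1 := htriv hk.subsingleton_of_comm
  tfae_have 3 → 1 := htriv hk.subsingleton_of_assoc
  tfae_have 4 → 1 := htriv hk.subsingleton_of_right_id
  tfae_have 5 → 1 := htriv hk.subsingleton_of_oneWay
  tfae_have 6 → 1 := htriv fun _ => hk.subsingleton_of_finite
  tfae_finish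

/-- For a partial combinatory algebra, the properties Trivial, Ab,
Assoc, ID_R, 1W and Finite are all equivalent. -/
theorem stmt_3 {R : Type} [Nonempty R] (op : R → R → Option R)
    (hK : ∃ k : R, ∀ a b : R, ∃ ka : R, op k a = some ka ∧ op ka b = some a)
    (hS : ∃ s : R,
      (∀ a b : R, (oapp op (oapp op (some s) (some a)) (some b)).isSome) ∧
      (∀ a b c : R,
        oapp op (oapp op (oapp op (some s) (some a)) (some b)) (some c) =
          oapp op (oapp op (some a) (some c)) (oapp op (some b) (some c)))) :
    [ -- Trivial
      (∃ a : R, (∀ b : R, b = a) ∧ op a a = some a),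
      -- Ab
      (∀ a b : R, op a b = op b a),
      -- Assoc
      (∀ a b c : R, oapp op (some a) (op b c) = oapp op (op a b) (some c)),
      -- ID_R
      (∃ j : R, ∀ a : R, op a j = some a),
      -- 1W
      (∀ r s a b : R, op r a = some b → op s b = some a → a = b),
      -- Finite
      Finite R ].TFAE :=
  stmt_3_general op hK
end

section
/- A partial applicative structure R is transitive (i.e. for every set I the relation ⊢_I on functions I → P(R) is transitive) if and only if for every r, s ∈ R there exists t ∈ R such that for every a ∈ R, if s·(r·a) is defined then t·a is defined and s·(r·a) = t·a (that is, [t] extends [s]∘[r]). -/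
/-- `[t]` extends `[s] ∘ [r]`. -/
def ExtendsComp {R : Type} (op : R → R → Option R) (r s t : R) : Prop :=
  ∀ a b : R, (op r a).bind (op s) = some b → op t a = some b

section Transitivity

variable {R : Type} {op : R → R → Option R}

theorem Entails.trans_of_extendsComp (hcomp : ∀ r s : R, ∃ t, ExtendsComp op r s t)
    {I : Type} {φ ψ ρ : I → Set R} (hφψ : Entails op φ ψ) (hψρ : Entails op ψ ρ) :
    Entails op φ ρ := by
  obtain ⟨r, hr⟩ := hφψ
  obtain ⟨s, hs⟩ := hψρ
  obtain ⟨t, ht⟩ := hcomp r s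
  refine ⟨t, fun i a ha => ?_⟩
  obtain ⟨b, hab, hb⟩ := hr i a ha
  obtain ⟨c, hbc, hc⟩ := hs i b hb
  exact ⟨c, ht a c (by rw [hab, Option.bind_some, hbc]), hc⟩

/- Index by the domain of `[s] ∘ [r]`: the realizer of `{a} ⊢ {s·(r·a)}`, obtained by
transitivity through `{r·a}`, is the required `t`. -/
theorem exists_extendsComp_of_entails_trans
    (htrans : ∀ (I : Type) (φ ψ ρ : I → Set R),
      Entails op φ ψ → Entails op ψ ρ → Entails op φ ρ) (r s : R) :
    ∃ t, ExtendsComp op r s t := by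
  let I := {a : R // ∃ b, (op r a).bind (op s) = some b}
  have hr : Entails op (fun i : I => {i.1}) (fun i => {b | op r i.1 = some b}) := by
    refine ⟨r, fun i a ha => ?_⟩
    obtain ⟨_, hrs⟩ := i.2
    obtain ⟨b, hb, -⟩ := Option.bind_eq_some_iff.mp hrs
    exact ⟨b, ha ▸ hb, hb⟩
  have hs : Entails op (fun i : I => {b | op r i.1 = some b})
      (fun i => {c | (op r i.1).bind (op s) = some c}) := by
    refine ⟨s, fun i b hb => ?_⟩
    obtain ⟨c, hrs⟩ := i.2
    refine ⟨c, ?_, hrs⟩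
    rwa [show op r i.1 = some b from hb, Option.bind_some] at hrs
  obtain ⟨t, ht⟩ := htrans I _ _ _ hr hs
  refine ⟨t, fun a c hac => ?_⟩
  obtain ⟨c', htc', hc'⟩ := ht ⟨a, c, hac⟩ a rfl
  rwa [Option.some_injective _ (hc'.symm.trans hac)] at htc'

end Transitivity

theorem stmt_5_general {R : Type} (op : R → R → Option R) :
    (∀ (I : Type) (φ ψ ρ : I → Set R),
        Entails op φ ψ → Entails op ψ ρ → Entails op φ ρ) ↔
      (∀ r s : R, ∃ t : R, ∀ a b : R,
        (op r a).bind (op s) = some b → op t a = some b) :=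
  ⟨exists_extendsComp_of_entails_trans,
    fun hcomp _ _ _ _ => Entails.trans_of_extendsComp hcomp⟩

/-- A PAS is transitive iff for all `r s` there is `t` whose
represented partial function extends `[s] ∘ [r]`. -/
theorem stmt_5 {R : Type} [Nonempty R] (op : R → R → Option R) :
    (∀ (I : Type) (φ ψ ρ : I → Set R),
        Entails op φ ψ → Entails op ψ ρ → Entails op φ ρ) ↔
      (∀ r s : R, ∃ t : R, ∀ a b : R,
        (op r a).bind (op s) = some b → op t a = some b) :=
  stmt_5_general op
end

section
/- For a partial applicative structure R the following are equivalent: (i) R has right bounds (for every set I and every φ : I → P(R) there exists ψ : I → P(R) with φ ⊢_I ψ); (ii) R has maximum (for every set I there exists ψ : I → P(R) with φ ⊢_I ψ for all φ : I → P(R)); (iii) R satisfies 1-Total (there exists r ∈ R such that r·a is defined for every a ∈ R). -/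
theorem Entails.exists_total_of_singleton {R : Type} {op : R → R → Option R} {ψ : R → Set R}
    (h : Entails op (fun a => {a}) ψ) : ∃ r : R, ∀ a : R, (op r a).isSome := by
  obtain ⟨r, hr⟩ := h
  refine ⟨r, fun a => ?_⟩
  obtain ⟨b, hb, -⟩ := hr a a rfl
  exact Option.isSome_iff_exists.mpr ⟨b, hb⟩

theorem entails_univ_of_total {R : Type} {op : R → R → Option R} {r : R}
    (hr : ∀ a : R, (op r a).isSome) {I : Type} (φ : I → Set R) :
    Entails op φ fun _ => Set.univ :=
  ⟨r, fun _ a _ => (Option.isSome_iff_exists.mp (hr a)).imp fun _ hb => ⟨hb, trivial⟩⟩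

theorem stmt_8_general {R : Type} (op : R → R → Option R) :
    [ -- right bounds
      (∀ (I : Type) (φ : I → Set R), ∃ ψ : I → Set R, Entails op φ ψ),
      -- maximum
      (∀ I : Type, ∃ ψ : I → Set R, ∀ φ : I → Set R, Entails op φ ψ),
      -- 1-Total
      (∃ r : R, ∀ a : R, (op r a).isSome) ].TFAE := by
  tfae_have 1 → 3 := fun h => (h R fun a => {a}).elim fun _ hψ => hψ.exists_total_of_singleton
  tfae_have 3 → 2 := fun ⟨_, hr⟩ _ => ⟨_, entails_univ_of_total hr⟩
  tfae_have 2 → 1 := fun h I φ => (h I).imp fun _ hψ => hψ φ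
  tfae_finish

/-- For a PAS, having right bounds, having maximum and satisfying
1-Total are equivalent. -/
theorem stmt_8 {R : Type} [Nonempty R] (op : R → R → Option R) :
    [ -- right bounds
      (∀ (I : Type) (φ : I → Set R), ∃ ψ : I → Set R, Entails op φ ψ),
      -- maximum
      (∀ I : Type, ∃ ψ : I → Set R, ∀ φ : I → Set R, Entails op φ ψ),
      -- 1-Total
      (∃ r : R, ∀ a : R, (op r a).isSome) ].TFAE :=
  stmt_8_general op
end

section
/- A partial applicative structure R is preorderal (i.e. for every set I the relation ⊢_I on functions I → P(R) is a preorder) if and only if: (1) there exists i ∈ R such that i·a = a for every a ∈ R, and (2) for every r, s ∈ R there exists t ∈ R such that for every a ∈ R, if s·(r·a) is defined then t·a is defined and s·(r·a) = t·a. -/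
section Preorderal

variable {R : Type} {op : R → R → Option R}

theorem Entails.refl_of_left_identity {i : R} (hi : ∀ a, op i a = some a) {I : Type}
    (φ : I → Set R) : Entails op φ φ :=
  ⟨i, fun _ a ha => ⟨a, hi a, ha⟩⟩

theorem Entails.trans_of_composable
    (hcomp : ∀ r s : R, ∃ t : R, ∀ a b : R, (op r a).bind (op s) = some b → op t a = some b)
    {I : Type} {φ ψ ρ : I → Set R} (hφψ : Entails op φ ψ) (hψρ : Entails op ψ ρ) :
    Entails op φ ρ := by
  obtain ⟨r, hr⟩ := hφψ
  obtain ⟨s, hs⟩ := hψρ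
  obtain ⟨t, ht⟩ := hcomp r s
  refine ⟨t, fun j a ha => ?_⟩
  obtain ⟨b, hab, hb⟩ := hr j a ha
  obtain ⟨c, hbc, hc⟩ := hs j b hb
  exact ⟨c, ht a c (by rw [hab]; exact hbc), hc⟩

theorem exists_left_identity_of_entails_singleton
    (h : Entails op (fun a : R => ({a} : Set R)) fun a => {a}) :
    ∃ i : R, ∀ a, op i a = some a := by
  obtain ⟨i, hi⟩ := h
  refine ⟨i, fun a => ?_⟩
  obtain ⟨b, hb, rfl⟩ := hi a a rfl
  exact hb

theorem exists_composite_of_entails_trans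
    (htrans : ∀ (I : Type) (φ ψ ρ : I → Set R),
      Entails op φ ψ → Entails op ψ ρ → Entails op φ ρ) (r s : R) :
    ∃ t : R, ∀ a c : R, (op r a).bind (op s) = some c → op t a = some c := by
  have hr : Entails op (fun p : R × R => {x | x = p.1 ∧ (op r p.1).bind (op s) = some p.2})
      fun p => {b | op s b = some p.2} :=
    ⟨r, by rintro ⟨a, c⟩ x ⟨rfl, hac⟩; exact Option.bind_eq_some_iff.mp hac⟩
  have hs : Entails op (fun p : R × R => {b | op s b = some p.2}) fun p => {p.2} :=
    ⟨s, fun p b hb => ⟨p.2, hb, rfl⟩⟩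
  obtain ⟨t, ht⟩ := htrans _ _ _ _ hr hs
  refine ⟨t, fun a c hac => ?_⟩
  obtain ⟨c', htc, rfl⟩ := ht (a, c) a ⟨rfl, hac⟩
  exact htc

end Preorderal

theorem stmt_10_general {R : Type} (op : R → R → Option R) :
    ((∀ (I : Type) (φ : I → Set R), Entails op φ φ) ∧
     (∀ (I : Type) (φ ψ ρ : I → Set R),
        Entails op φ ψ → Entails op ψ ρ → Entails op φ ρ)) ↔
    ((∃ i : R, ∀ a : R, op i a = some a) ∧
     (∀ r s : R, ∃ t : R, ∀ a b : R,
        (op r a).bind (op s) = some b → op t a = some b)) := by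
  constructor
  · rintro ⟨hrefl, htrans⟩
    exact ⟨exists_left_identity_of_entails_singleton (hrefl R _),
      exists_composite_of_entails_trans htrans⟩
  · rintro ⟨⟨i, hi⟩, hcomp⟩
    exact ⟨fun _ => Entails.refl_of_left_identity hi,
      fun _ _ _ _ => Entails.trans_of_composable hcomp⟩

/-- A PAS is preorderal iff it has a left identity element and
for all `r s` there is `t` whose represented function extends `[s] ∘ [r]`. -/
theorem stmt_10 {R : Type} [Nonempty R] (op : R → R → Option R) :
    ((∀ (I : Type) (φ : I → Set R), Entails op φ φ) ∧
     (∀ (I : Type) (φ ψ ρ : I → Set R),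
        Entails op φ ψ → Entails op ψ ρ → Entails op φ ρ)) ↔
    ((∃ i : R, ∀ a : R, op i a = some a) ∧
     (∀ r s : R, ∃ t : R, ∀ a b : R,
        (op r a).bind (op s) = some b → op t a = some b)) :=
  stmt_10_general op
end

section
/- Let f : R ⇀ R be a partial function on a nonempty set R and n ∈ ℕ. If f is TO then the n-th iterate f^n is TO, and if f is TL then f^n is TL. -/
/-!
Extend `f` to the total map `Option.bind · f` on `Option R`, with `none` as an absorbing
"undefined" point: then `piter f n a` is its `n`-th iterate at `some a`, the order of `a` is the
minimal period of `some a`, and iterating `piter f n` amounts to iterating this map `n` times.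
The minimal period of a point under `g^[n]` is `p / gcd p n` where `p` is its period under `g`,
which divides `p` and is hence odd when `p` is; a point where `f^m` diverges has `(f^n)^m = f^(n*m)`
undefined too, and fixed points of `f` stay fixed under `f^n`.
-/

open Function

namespace Function

variable {α : Type*} {g : α → α} {x : α}

theorem isLeast_period_iff {n : ℕ} :
    (1 ≤ n ∧ g^[n] x = x ∧ ∀ m, 1 ≤ m → g^[m] x = x → n ≤ m) ↔
      0 < n ∧ minimalPeriod g x = n := by
  constructor
  · rintro ⟨hn, hper, hmin⟩
    have hpos : 0 < minimalPeriod g x := IsPeriodicPt.minimalPeriod_pos hn hper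
    exact ⟨hn, ((IsPeriodicPt.minimalPeriod_le hn hper).antisymm
      (hmin _ hpos (isPeriodicPt_minimalPeriod g x)))⟩
  · rintro ⟨hn, rfl⟩
    exact ⟨hn, iterate_minimalPeriod, fun m hm hper => IsPeriodicPt.minimalPeriod_le hm hper⟩

theorem odd_minimalPeriod_iterate (h : Odd (minimalPeriod g x)) (n : ℕ) :
    Odd (minimalPeriod g^[n] x) := by
  have hx : x ∈ periodicPts g := minimalPeriod_pos_iff_mem_periodicPts.1 h.pos
  rw [minimalPeriod_iterate_eq_div_gcd' hx]
  exact h.of_dvd_nat (Nat.div_dvd_of_dvd (Nat.gcd_dvd_left _ _))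

end Function

section

variable {R : Type}

theorem piter_eq_iterate_bind (f : R → Option R) (n : ℕ) (a : R) :
    piter f n a = (Option.bind · f)^[n] (some a) := by
  induction n with
  | zero => rfl
  | succ n ih => rw [iterate_succ_apply', ← ih]; rfl

theorem bind_piter_eq_iterate_bind (f : R → Option R) (n : ℕ) :
    (Option.bind · (piter f n)) = (Option.bind · f)^[n] := by
  funext o
  cases o with
  | none => exact (iterate_fixed rfl n).symm
  | some a => exact piter_eq_iterate_bind f n a

theorem piter_piter (f : R → Option R) (n m : ℕ) (a : R) :
    piter (piter f n) m a = piter f (n * m) a := by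
  rw [piter_eq_iterate_bind, bind_piter_eq_iterate_bind, ← iterate_mul, ← piter_eq_iterate_bind]

theorem piter_eq_none_of_le {f : R → Option R} {a : R} {m k : ℕ} (h : piter f m a = none)
    (hmk : m ≤ k) : piter f k a = none := by
  obtain ⟨j, rfl⟩ := Nat.exists_eq_add_of_le hmk
  rw [piter_eq_iterate_bind, add_comm, iterate_add_apply, ← piter_eq_iterate_bind, h]
  exact iterate_fixed rfl j

theorem piter_of_eq_some_self {f : R → Option R} {a : R} (h : f a = some a) (n : ℕ) :
    piter f n a = some a := by
  rw [piter_eq_iterate_bind]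
  exact iterate_fixed h n

theorem exists_piter_piter_eq_none {f : R → Option R} {a : R} {n : ℕ} (hn : n ≠ 0)
    (h : ∃ m, 1 ≤ m ∧ piter f m a = none) : ∃ m, 1 ≤ m ∧ piter (piter f n) m a = none := by
  obtain ⟨m, hm, hnone⟩ := h
  refine ⟨m, hm, ?_⟩
  rw [piter_piter]
  exact piter_eq_none_of_le hnone (Nat.le_mul_of_pos_left m (Nat.pos_of_ne_zero hn))

theorem tOfun_iff_odd_minimalPeriod (f : R → Option R) :
    TOfun f ↔ ∀ a, Odd (minimalPeriod (Option.bind · f) (some a)) ∨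
      ∃ m, 1 ≤ m ∧ piter f m a = none := by
  have hord (a : R) : (∃ n, (1 ≤ n ∧ piter f n a = some a ∧
      ∀ m, 1 ≤ m → piter f m a = some a → n ≤ m) ∧ Odd n) ↔
        Odd (minimalPeriod (Option.bind · f) (some a)) := by
    simp_rw [piter_eq_iterate_bind, isLeast_period_iff]
    exact ⟨fun ⟨_, ⟨_, hp⟩, hodd⟩ => hp ▸ hodd, fun hodd => ⟨_, ⟨hodd.pos, rfl⟩, hodd⟩⟩
  simp_rw [TOfun, hord]

end

theorem stmt_12_general {R : Type} (f : R → Option R) (n : ℕ) :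
    (TOfun f → TOfun (piter f n)) ∧ (TLfun f → TLfun (piter f n)) := by
  rcases eq_or_ne n 0 with rfl | hn
  · exact ⟨fun _ _ => Or.inl ⟨1, ⟨le_rfl, rfl, fun _ hm _ => hm⟩, odd_one⟩, fun _ _ => Or.inl rfl⟩
  refine ⟨fun hf => ?_, fun hf a => (hf a).imp (piter_of_eq_some_self · n)
    (exists_piter_piter_eq_none hn)⟩
  rw [tOfun_iff_odd_minimalPeriod] at hf ⊢
  intro a
  refine (hf a).imp (fun hodd => ?_) (exists_piter_piter_eq_none hn)
  rw [bind_piter_eq_iterate_bind]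
  exact odd_minimalPeriod_iterate hodd n

/-- If `f` is TO (resp. TL) then so is its `n`-th iterate. -/
theorem stmt_12 {R : Type} [Nonempty R] (f : R → Option R) (n : ℕ) :
    (TOfun f → TOfun (piter f n)) ∧ (TLfun f → TLfun (piter f n)) :=
  stmt_12_general f n
end

section
/- Let R be an antisymmetric partial applicative structure (A ⊢ B and B ⊢ A imply A = B for all A, B ⊆ R, and likewise for all relations ⊢_I). Then R satisfies property TO: for every r ∈ R, the partial function [r] : a ↦ r·a is TO. -/
lemma piter_eq_iterate {R : Type} (f : R → Option R) (n : ℕ) (a : R) :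
    piter f n a = (fun x : Option R => x.bind f)^[n] (some a) := by
  induction n with
  | zero => rfl
  | succ n ih => rw [Function.iterate_succ_apply', ← ih, piter]

lemma exists_piter_succ_eq_of_piter_eq {R : Type} {f : R → Option R} {n : ℕ} {a x : R}
    (hx : piter f n a = some x) (hdef : piter f (n + 1) a ≠ none) :
    ∃ y, f x = some y ∧ piter f (n + 1) a = some y := by
  have hstep : piter f (n + 1) a = f x := by simp only [piter, hx, Option.bind_some]
  obtain ⟨y, hy⟩ := Option.ne_none_iff_exists'.mp hdef
  exact ⟨y, hstep ▸ hy, hy⟩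

lemma exists_odd_order_of_piter_eq_self {R : Type} {f : R → Option R} {a : R} {m : ℕ}
    (hm : Odd m) (hper : piter f m a = some a) :
    ∃ n : ℕ, (1 ≤ n ∧ piter f n a = some a ∧
      ∀ m : ℕ, 1 ≤ m → piter f m a = some a → n ≤ m) ∧ Odd n := by
  set F : Option R → Option R := fun x => x.bind f
  have hperiodic : ∀ k, piter f k a = some a ↔ Function.IsPeriodicPt F k (some a) := fun k => by
    rw [piter_eq_iterate]; rfl
  have hperm : Function.IsPeriodicPt F m (some a) := (hperiodic m).mp hper
  refine ⟨Function.minimalPeriod F (some a), ⟨?_, ?_, fun k hk hk' => ?_⟩, ?_⟩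
  · exact Function.minimalPeriod_pos_of_mem_periodicPts ⟨m, hm.pos, hperm⟩
  · exact (hperiodic _).mpr (Function.isPeriodicPt_minimalPeriod F _)
  · exact ((hperiodic k).mp hk').minimalPeriod_le hk
  · exact hm.of_dvd_nat hperm.minimalPeriod_dvd

/-- Antisymmetry forces a total orbit of `[r]` to return at an odd time: `[r]` realizes both
`A ⊢ B` and `B ⊢ A` for the sets `A`, `B` of even and odd iterates, so `a ∈ A = B`. -/
lemma exists_odd_piter_eq_self {R : Type} {op : R → R → Option R}
    (hAnt1 : ∀ A B : Set R, Entails1 op A B → Entails1 op B A → A = B) (r a : R)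
    (hdef : ∀ n, 1 ≤ n → piter (op r) n a ≠ none) :
    ∃ m, Odd m ∧ piter (op r) m a = some a := by
  set A : Set R := {x | ∃ k, piter (op r) (2 * k) a = some x}
  set B : Set R := {x | ∃ k, piter (op r) (2 * k + 1) a = some x}
  have hAB : Entails1 op A B := by
    refine ⟨r, fun x ⟨k, hx⟩ => ?_⟩
    obtain ⟨y, hxy, hy⟩ := exists_piter_succ_eq_of_piter_eq hx (hdef _ (by omega))
    exact ⟨y, hxy, k, hy⟩
  have hBA : Entails1 op B A := by
    refine ⟨r, fun x ⟨k, hx⟩ => ?_⟩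
    obtain ⟨y, hxy, hy⟩ := exists_piter_succ_eq_of_piter_eq hx (hdef _ (by omega))
    exact ⟨y, hxy, k + 1, hy⟩
  have haB : a ∈ B := hAnt1 A B hAB hBA ▸ (⟨0, rfl⟩ : a ∈ A)
  obtain ⟨k, hk⟩ := haB
  exact ⟨2 * k + 1, odd_two_mul_add_one k, hk⟩

theorem stmt_13_general {R : Type} (op : R → R → Option R)
    (hAnt1 : ∀ A B : Set R, Entails1 op A B → Entails1 op B A → A = B) :
    ∀ r : R, TOfun (fun a => op r a) := by
  intro r a
  by_cases hdiv : ∃ n : ℕ, 1 ≤ n ∧ piter (op r) n a = none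
  · exact Or.inr hdiv
  · push Not at hdiv
    obtain ⟨m, hm, hper⟩ := exists_odd_piter_eq_self hAnt1 r a hdiv
    exact Or.inl (exists_odd_order_of_piter_eq_self hm hper)

/-- An antisymmetric PAS satisfies property TO. -/
theorem stmt_13 {R : Type} [Nonempty R] (op : R → R → Option R)
    (hAnt1 : ∀ A B : Set R, Entails1 op A B → Entails1 op B A → A = B)
    (hAnt : ∀ (I : Type) (φ ψ : I → Set R),
      Entails op φ ψ → Entails op ψ φ → φ = ψ) :
    ∀ r : R, TOfun (fun a => op r a) :=
  stmt_13_general op hAnt1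
end

section
/- Let R be a transitive partial applicative structure satisfying property 1W and property TO. Then R satisfies property TL: for every r ∈ R, the partial function [r] is TL. -/
/-
A point `a` of finite order `n` under `[r]` is a fixed point. Its successor `a₁ = r·a` is mapped
back to `a` by the iterate `[r]^(n-1)`, and transitivity of `⊢` composes the realizers `r` into a
single `s` with `s·a₁ = a`. Then `r·a = a₁` and `s·a₁ = a`, so `a = a₁` by 1W.
-/

theorem piter_succ' {R : Type} (f : R → Option R) (n : ℕ) (a : R) :
    piter f (n + 1) a = (f a).bind (piter f n) := by
  induction n generalizing a with
  | zero => simp [piter]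
  | succ n ih =>
    show (piter f (n + 1) a).bind f = _
    rw [ih, Option.bind_assoc]
    rfl

theorem entails_singleton_iff {R : Type} (op : R → R → Option R) (a b : R) :
    Entails op (fun _ : Unit => {a}) (fun _ => {b}) ↔ ∃ s, op s a = some b := by
  simp [Entails]

theorem exists_app_eq_of_piter_eq {R : Type} (op : R → R → Option R)
    (hTrans : ∀ (I : Type) (φ ψ ρ : I → Set R),
      Entails op φ ψ → Entails op ψ ρ → Entails op φ ρ)
    (r : R) {n : ℕ} (hn : 1 ≤ n) {a b : R} (hab : piter (op r) n a = some b) :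
    ∃ s, op s a = some b := by
  induction n, hn using Nat.le_induction generalizing b with
  | base => exact ⟨r, by simpa [piter] using hab⟩
  | succ n _ ih =>
    obtain ⟨c, hc, hcb⟩ := Option.bind_eq_some_iff.mp hab
    rw [← entails_singleton_iff]
    exact hTrans Unit _ _ _ ((entails_singleton_iff op a c).mpr (ih hc))
      ((entails_singleton_iff op c b).mpr ⟨r, hcb⟩)

theorem app_eq_self_of_piter_eq_self {R : Type} (op : R → R → Option R)
    (hTrans : ∀ (I : Type) (φ ψ ρ : I → Set R),
      Entails op φ ψ → Entails op ψ ρ → Entails op φ ρ)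
    (h1W : ∀ r s a b : R, op r a = some b → op s b = some a → a = b)
    (r : R) {n : ℕ} (hn : 1 ≤ n) {a : R} (ha : piter (op r) n a = some a) :
    op r a = some a := by
  obtain ⟨m, rfl⟩ := Nat.exists_eq_add_of_le' hn
  rw [piter_succ'] at ha
  obtain ⟨a₁, hra, ha₁⟩ := Option.bind_eq_some_iff.mp ha
  rcases Nat.eq_zero_or_pos m with rfl | hm
  · simpa [piter, ← Option.some_inj.mp ha₁] using hra
  · obtain ⟨s, hs⟩ := exists_app_eq_of_piter_eq op hTrans r hm ha₁
    rwa [← h1W r s a a₁ hra hs] at hra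

theorem stmt_14_general {R : Type} (op : R → R → Option R)
    (hTrans : ∀ (I : Type) (φ ψ ρ : I → Set R),
      Entails op φ ψ → Entails op ψ ρ → Entails op φ ρ)
    (h1W : ∀ r s a b : R, op r a = some b → op s b = some a → a = b)
    (hTO : ∀ r : R, TOfun (fun a => op r a)) :
    ∀ r : R, TLfun (fun a => op r a) := by
  intro r a
  rcases hTO r a with ⟨n, ⟨hn, ha, -⟩, -⟩ | hdiv
  · exact Or.inl (app_eq_self_of_piter_eq_self op hTrans h1W r hn ha)
  · exact Or.inr hdiv

/-- A transitive PAS satisfying 1W and TO satisfies TL. -/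
theorem stmt_14 {R : Type} [Nonempty R] (op : R → R → Option R)
    (hTrans : ∀ (I : Type) (φ ψ ρ : I → Set R),
      Entails op φ ψ → Entails op ψ ρ → Entails op φ ρ)
    (h1W : ∀ r s a b : R, op r a = some b → op s b = some a → a = b)
    (hTO : ∀ r : R, TOfun (fun a => op r a)) :
    ∀ r : R, TLfun (fun a => op r a) :=
  stmt_14_general op hTrans h1W hTO
end

section
/- Let R be a transitive partial applicative structure satisfying property TL and property 1W. Then R is antisymmetric: for all subsets A, B ⊆ R, if A ⊢ B and B ⊢ A then A = B (and hence ⊢_I is antisymmetric for every set I). -/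
def EntailsTransitive {R : Type} (op : R → R → Option R) : Prop :=
  ∀ (I : Type) (φ ψ ρ : I → Set R), Entails op φ ψ → Entails op ψ ρ → Entails op φ ρ

section Iterates

variable {R : Type} {f : R → Option R} {S : Set R}

lemma exists_piter_eq_some_mem (hf : ∀ a ∈ S, ∃ b ∈ S, f a = some b) {a : R} (ha : a ∈ S) :
    ∀ n, ∃ x ∈ S, piter f n a = some x
  | 0 => ⟨a, ha, rfl⟩
  | n + 1 => by
    obtain ⟨x, hxS, hx⟩ := exists_piter_eq_some_mem hf ha n
    obtain ⟨y, hyS, hy⟩ := hf x hxS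
    exact ⟨y, hyS, by simp only [piter, hx, Option.bind_some, hy]⟩

lemma TLfun.apply_eq_self_of_mapsTo (hTL : TLfun f) (hf : ∀ a ∈ S, ∃ b ∈ S, f a = some b)
    {a : R} (ha : a ∈ S) : f a = some a := by
  refine (hTL a).resolve_right ?_
  rintro ⟨n, -, hn⟩
  obtain ⟨x, -, hx⟩ := exists_piter_eq_some_mem hf ha n
  simp [hn] at hx

end Iterates

section Antisymmetry

variable {R : Type} {op : R → R → Option R}

lemma Entails.entails1 {I : Type} {φ ψ : I → Set R} (h : Entails op φ ψ) (i : I) :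
    Entails1 op (φ i) (ψ i) :=
  let ⟨r, hr⟩ := h
  ⟨r, hr i⟩

lemma EntailsTransitive.exists_realizer_comp (hTrans : EntailsTransitive op) (r s : R) {A : Set R}
    (hA : ∀ a ∈ A, ∃ c, (op r a).bind (op s) = some c) :
    ∃ t, ∀ a ∈ A, op t a = (op r a).bind (op s) := by
  have hφψ : Entails op (fun a : A => ({a.1} : Set R)) (fun a => {b | op r a = some b}) := by
    refine ⟨r, fun a _ hx => ?_⟩
    obtain ⟨c, hc⟩ := hA a a.2
    obtain ⟨b, hb, -⟩ := Option.bind_eq_some_iff.mp hc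
    exact ⟨b, hx ▸ hb, hb⟩
  have hψρ : Entails op (fun a : A => {b | op r a = some b})
      (fun a => {c | (op r a).bind (op s) = some c}) := by
    refine ⟨s, fun a b (hb : op r a = some b) => ?_⟩
    obtain ⟨c, hc⟩ := hA a a.2
    rw [hb, Option.bind_some] at hc
    exact ⟨c, hc, by simp only [Set.mem_ofPred_eq, hb, Option.bind_some, hc]⟩
  obtain ⟨t, ht⟩ := hTrans _ _ _ _ hφψ hψρ
  refine ⟨t, fun a ha => ?_⟩
  obtain ⟨c, htc, hc⟩ := ht ⟨a, ha⟩ a rfl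
  exact htc.trans hc.symm

lemma subset_of_entails1_of_entails1 (hTrans : EntailsTransitive op)
    (hTL : ∀ r : R, TLfun (fun a => op r a))
    (h1W : ∀ r s a b : R, op r a = some b → op s b = some a → a = b)
    {A B : Set R} (hAB : Entails1 op A B) (hBA : Entails1 op B A) : A ⊆ B := by
  obtain ⟨r, hr⟩ := hAB
  obtain ⟨s, hs⟩ := hBA
  have hround : ∀ a ∈ A, ∃ b ∈ B, ∃ c ∈ A, op r a = some b ∧ op s b = some c := by
    intro a ha
    obtain ⟨b, hb, hbB⟩ := hr a ha
    obtain ⟨c, hc, hcA⟩ := hs b hbB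
    exact ⟨b, hbB, c, hcA, hb, hc⟩
  obtain ⟨t, ht⟩ := hTrans.exists_realizer_comp r s (A := A) fun a ha => by
    obtain ⟨b, -, c, -, hb, hc⟩ := hround a ha
    exact ⟨c, by rw [hb, Option.bind_some, hc]⟩
  have htA : ∀ a ∈ A, ∃ c ∈ A, op t a = some c := by
    intro a ha
    obtain ⟨b, -, c, hcA, hb, hc⟩ := hround a ha
    exact ⟨c, hcA, by rw [ht a ha, hb, Option.bind_some, hc]⟩
  intro a ha
  obtain ⟨b, hbB, c, -, hb, hc⟩ := hround a ha
  have hfix : op t a = some a := (hTL t).apply_eq_self_of_mapsTo htA ha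
  have hca : c = a := by
    rw [ht a ha, hb, Option.bind_some, hc] at hfix
    exact Option.some.inj hfix
  rwa [h1W r s a b hb (hca ▸ hc)]

lemma eq_of_entails1_of_entails1 (hTrans : EntailsTransitive op)
    (hTL : ∀ r : R, TLfun (fun a => op r a))
    (h1W : ∀ r s a b : R, op r a = some b → op s b = some a → a = b)
    {A B : Set R} (hAB : Entails1 op A B) (hBA : Entails1 op B A) : A = B :=
  (subset_of_entails1_of_entails1 hTrans hTL h1W hAB hBA).antisymm
    (subset_of_entails1_of_entails1 hTrans hTL h1W hBA hAB)

end Antisymmetry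

theorem stmt_15_general {R : Type} (op : R → R → Option R)
    (hTrans : ∀ (I : Type) (φ ψ ρ : I → Set R),
      Entails op φ ψ → Entails op ψ ρ → Entails op φ ρ)
    (hTL : ∀ r : R, TLfun (fun a => op r a))
    (h1W : ∀ r s a b : R, op r a = some b → op s b = some a → a = b) :
    (∀ A B : Set R, Entails1 op A B → Entails1 op B A → A = B) ∧
    (∀ (I : Type) (φ ψ : I → Set R),
      Entails op φ ψ → Entails op ψ φ → φ = ψ) :=
  ⟨fun _ _ => eq_of_entails1_of_entails1 hTrans hTL h1W,
    fun _ _ _ hφψ hψφ => funext fun i =>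
      eq_of_entails1_of_entails1 hTrans hTL h1W (hφψ.entails1 i) (hψφ.entails1 i)⟩

/-- A transitive PAS satisfying TL and 1W is antisymmetric. -/
theorem stmt_15 {R : Type} [Nonempty R] (op : R → R → Option R)
    (hTrans : ∀ (I : Type) (φ ψ ρ : I → Set R),
      Entails op φ ψ → Entails op ψ ρ → Entails op φ ρ)
    (hTL : ∀ r : R, TLfun (fun a => op r a))
    (h1W : ∀ r s a b : R, op r a = some b → op s b = some a → a = b) :
    (∀ A B : Set R, Entails1 op A B → Entails1 op B A → A = B) ∧
    (∀ (I : Type) (φ ψ : I → Set R),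
      Entails op φ ψ → Entails op ψ φ → φ = ψ) :=
  stmt_15_general op hTrans hTL h1W
end

section
/- Let R be a preorderal partial applicative structure such that the cardinality of the product ∏_{r ∈ R} R(r) is strictly greater than the cardinality of R, where R(r) = {s·r | s ∈ R, s·r defined}. Then the preorder ⊢_R on P(R)^R is not complete: there exists a family of elements of P(R)^R (indexed by R) having no supremum with respect to ⊢_R. -/
def singletonAt {R : Type} (i : R) : R → Set R :=
  fun j => {a | j = i ∧ a = i}

def IsEntailsSup {R I J : Type} (op : R → R → Option R) (F : J → I → Set R)
    (ψ : I → Set R) : Prop :=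
  (∀ j, Entails op (F j) ψ) ∧ ∀ χ : I → Set R, (∀ j, Entails op (F j) χ) → Entails op ψ χ

theorem entails_singletonAt_iff {R : Type} (op : R → R → Option R) (i : R) (χ : R → Set R) :
    Entails op (singletonAt i) χ ↔ ∃ s b, op s i = some b ∧ b ∈ χ i := by
  constructor
  · rintro ⟨s, hs⟩
    obtain ⟨b, hb, hbχ⟩ := hs i i ⟨rfl, rfl⟩
    exact ⟨s, b, hb, hbχ⟩
  · rintro ⟨s, b, hb, hbχ⟩
    refine ⟨s, fun j a ha => ?_⟩
    obtain ⟨rfl, rfl⟩ := ha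
    exact ⟨b, hb, hbχ⟩

theorem mk_le_of_entails_singletons {R I ι : Type} (op : R → R → Option R) {ψ : I → Set R}
    (hψ : ∀ i, (ψ i).Nonempty) (c : ι → I → R) (hc : Function.Injective c)
    (hentails : ∀ k, Entails op ψ (fun i => {c k i})) :
    Cardinal.mk ι ≤ Cardinal.mk R := by
  choose a ha using hψ
  choose r hr using hentails
  refine Cardinal.mk_le_of_injective (f := r) fun k l hkl => hc (funext fun i => ?_)
  obtain ⟨b, hbk, rfl⟩ := hr k i (a i) (ha i)
  obtain ⟨b', hbl, rfl⟩ := hr l i (a i) (ha i)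
  rw [hkl] at hbk
  exact Option.some_injective _ (hbk.symm.trans hbl)

theorem mk_pi_range_le_of_isEntailsSup {R : Type} (op : R → R → Option R) {ψ : R → Set R}
    (hψ : IsEntailsSup op singletonAt ψ) :
    Cardinal.mk (∀ r : R, {b : R // ∃ s : R, op s r = some b}) ≤ Cardinal.mk R := by
  obtain ⟨hub, hlub⟩ := hψ
  have hψne : ∀ i, (ψ i).Nonempty := fun i => by
    obtain ⟨-, b, -, hb⟩ := (entails_singletonAt_iff op i ψ).1 (hub i)
    exact ⟨b, hb⟩
  refine mk_le_of_entails_singletons op hψne (fun c i => (c i).1)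
    (fun c d hcd => funext fun i => Subtype.ext (congrFun hcd i)) fun c => hlub _ fun i => ?_
  obtain ⟨s, hs⟩ := (c i).2
  exact (entails_singletonAt_iff op i _).2 ⟨s, _, hs, rfl⟩

theorem stmt_19_general {R : Type} (op : R → R → Option R)
    (hcard : Cardinal.mk R <
      Cardinal.mk (∀ r : R, {b : R // ∃ s : R, op s r = some b})) :
    ∃ F : R → (R → Set R), ¬ ∃ ψ : R → Set R,
      (∀ i : R, Entails op (F i) ψ) ∧
      (∀ χ : R → Set R, (∀ i : R, Entails op (F i) χ) → Entails op ψ χ) :=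
  ⟨singletonAt, fun ⟨_, hψ⟩ => hcard.not_ge (mk_pi_range_le_of_isEntailsSup op hψ)⟩

/-- If `R` is a preorderal PAS with `|∏_{r ∈ R} R(r)| > |R|`,
where `R(r) = {s·r | s ∈ R, s·r defined}`, then the preorder `⊢_R` on
`P(R)^R` is not complete: some `R`-indexed family has no supremum. -/
theorem stmt_19 {R : Type} [Nonempty R] (op : R → R → Option R)
    (hRefl : ∀ (I : Type) (φ : I → Set R), Entails op φ φ)
    (hTrans : ∀ (I : Type) (φ ψ ρ : I → Set R),
      Entails op φ ψ → Entails op ψ ρ → Entails op φ ρ)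
    (hcard : Cardinal.mk R <
      Cardinal.mk (∀ r : R, {b : R // ∃ s : R, op s r = some b})) :
    ∃ F : R → (R → Set R), ¬ ∃ ψ : R → Set R,
      (∀ i : R, Entails op (F i) ψ) ∧
      (∀ χ : R → Set R, (∀ i : R, Entails op (F i) χ) → Entails op ψ χ) :=
  stmt_19_general op hcard
end
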